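/- Fix an integer m ≥ 2 and a real δ > 0, and let r = √(c_OY c_YO)/c_OO ∈ (0,1). Let 0 < b_1 < b_2 and k ≥ 1 an integer. Let X_0, X_1, …, X_k be independent with X_0 uniform on [b_1,b_2] and X_1,…,X_k each with density (1/2)e^{−|x|}; set S_i = ∑_{j=0}^{i} X_j and N(k) = #{i ∈ {1,…,k−1} : X_i and X_{i+1} have different signs}. Independently, let X_0' be uniform on [b_1,b_2], (Y_i)_{i≥1} i.i.d. exponential with mean 1, Z_1 uniform on {−1,+1}, and (Z_i)_{i≥2} i.i.d. with P(Z_i = −1) = r/(1+r), P(Z_i = +1) = 1/(1+r), all mutually independent; set A_ℓ = Y_ℓ ∏_{i=1}^{ℓ} Z_i and T_ℓ = X_0' + ∑_{i=1}^{ℓ} A_i. Then E[ r^{N(k)} · 1{ b_1 ≤ S_i ≤ b_2 for all i ∈ {1,…,k} } ] = ((1+r)/2)^{k−1} · P( b_1 ≤ T_i ≤ b_2 for all i ∈ {1,…,k} ). -/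

import Mathlib

open MeasureTheory Filter Set
open scoped ENNReal NNReal Classical

noncomputable section

namespace PAPaper

/-- The exponential growth parameter `ν` of the Pólya point tree. -/
def nuConst (m : ℕ) (δ : ℝ) : ℝ :=
  2 * (((m : ℝ) * ((m : ℝ) + δ) +
      Real.sqrt ((m : ℝ) * ((m : ℝ) - 1) * ((m : ℝ) + δ) * ((m : ℝ) + 1 + δ))) / δ)

/-- `χ = (m+δ)/(2m+δ)`. -/
def chiC (m : ℕ) (δ : ℝ) : ℝ := ((m : ℝ) + δ) / (2 * (m : ℝ) + δ)

/-- The labels `O` (old) and `Y` (young) of the Pólya point tree. -/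
inductive Label : Type
  | O : Label
  | Y : Label
deriving DecidableEq

instance : Fintype Label := ⟨{Label.O, Label.Y}, fun x => by cases x <;> simp⟩

/-- The constants `c_{st}` of the offspring kernel. -/
def cst (m : ℕ) (δ : ℝ) : Label → Label → ℝ
  | .O, .O => (m : ℝ) * ((m : ℝ) + δ) / (2 * (m : ℝ) + δ)
  | .O, .Y => (m : ℝ) * ((m : ℝ) + 1 + δ) / (2 * (m : ℝ) + δ)
  | .Y, .O => ((m : ℝ) - 1) * ((m : ℝ) + δ) / (2 * (m : ℝ) + δ)
  | .Y, .Y => (m : ℝ) * ((m : ℝ) + δ) / (2 * (m : ℝ) + δ)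

/-- The offspring kernel `κ((x,s),(y,t))` of the Pólya point tree. -/
def ker (m : ℕ) (δ : ℝ) (p q : ℝ × Label) : ℝ :=
  cst m δ p.2 q.2 *
    ((if q.1 < p.1 ∧ q.2 = Label.O then 1 else 0) +
      (if p.1 < q.1 ∧ q.2 = Label.Y then 1 else 0)) /
    (max p.1 q.1 ^ chiC m δ * min p.1 q.1 ^ (1 - chiC m δ))

/-- The entries of a `(k+1)`-tuple, as a function of a natural number index. -/
def app {k : ℕ} {α : Type*} (f : Fin (k + 1) → α) (i : ℕ) : α :=
  f ⟨min i k, Nat.lt_succ_of_le (Nat.min_le_right i k)⟩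

/-- The label sequence of a path of vertices: `lb_0` is the prescribed label, and
`lb_i = O` if `π_i ≤ π_{i-1}`, `lb_i = Y` otherwise. -/
def lbl {k : ℕ} (lb0 : Label) (π : Fin (k + 1) → ℕ) (i : ℕ) : Label :=
  if i = 0 then lb0 else if app π i ≤ app π (i - 1) then Label.O else Label.Y

/-- The uniform distribution on `[a, b]`. -/
def unifMeas (a b : ℝ) : Measure ℝ := (ENNReal.ofReal (b - a))⁻¹ • volume.restrict (Set.Icc a b)

/-- The two-sided exponential (Laplace) distribution with density `(1/2) e^{-|x|}`. -/
def laplaceMeas : Measure ℝ := volume.withDensity fun x => ENNReal.ofReal (1 / 2 * Real.exp (-|x|))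

/-- The law of the random walk increments `(X_0, X_1, …, X_k)`: `X_0` uniform on
`[b_1, b_2]`, and `X_1, …, X_k` with density `(1/2)e^{-|x|}`, all independent. -/
def walkMeas (b1 b2 : ℝ) (k : ℕ) : Measure (Fin (k + 1) → ℝ) :=
  Measure.pi fun i => if i = 0 then unifMeas b1 b2 else laplaceMeas

/-- `x` and `y` have different signs. -/
def diffSign (x y : ℝ) : Prop := (x ≤ 0 ∧ 0 < y) ∨ (0 < x ∧ y ≤ 0)

/-- `N(k)`: the number of sign changes of `(X_1, …, X_k)`. -/
def signChanges (k : ℕ) (X : Fin (k + 1) → ℝ) : ℕ :=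
  ((Finset.Ico 1 k).filter fun i => diffSign (app X i) (app X (i + 1))).card

/-- `S_i = X_0 + ⋯ + X_i`. -/
def walkSum (k : ℕ) (X : Fin (k + 1) → ℝ) (i : ℕ) : ℝ := ∑ j ∈ Finset.range (i + 1), app X j

/-- The measure of a `±1`-valued random variable which is `-1` with probability `p` and
`+1` with probability `1 - p`. -/
def pmMeas (p : ℝ) : Measure ℝ :=
  ENNReal.ofReal p • Measure.dirac (-1) + ENNReal.ofReal (1 - p) • Measure.dirac 1

/-- The standard exponential distribution (mean 1). -/
def expMeas : Measure ℝ :=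
  volume.withDensity fun x => ENNReal.ofReal (if 0 ≤ x then Real.exp (-x) else 0)

/-- The joint law of `(X_0', Y_1, …, Y_k; Z_1, …, Z_k)`: `X_0'` uniform on `[b_1, b_2]`,
`Y_i` standard exponentials, `Z_1` uniform on `{-1, 1}`, `Z_i` (`i ≥ 2`) equal to `-1`
with probability `r/(1+r)`, all independent. -/
def model2 (b1 b2 r : ℝ) (k : ℕ) : Measure ((Fin (k + 1) → ℝ) × (Fin k → ℝ)) :=
  (Measure.pi fun i : Fin (k + 1) => if i = 0 then unifMeas b1 b2 else expMeas).prod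
    (Measure.pi fun i : Fin k => if i.val = 0 then pmMeas (1 / 2) else pmMeas (r / (1 + r)))

/-- The entries of a `k`-tuple as a function of a natural index (defaulting to `0`). -/
def appk {k : ℕ} (f : Fin k → ℝ) (i : ℕ) : ℝ := if h : i < k then f ⟨i, h⟩ else 0

/-- `T_ℓ = X_0' + ∑_{i=1}^ℓ A_i` where `A_i = Y_i ∏_{j=1}^i Z_j`. -/
def Tl (k : ℕ) (p : (Fin (k + 1) → ℝ) × (Fin k → ℝ)) (ℓ : ℕ) : ℝ :=
  app p.1 0 + ∑ i ∈ Finset.Icc 1 ℓ, app p.1 i * ∏ j ∈ Finset.Icc 1 i, appk p.2 (j - 1)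

/-- `r = √(c_OY c_YO)/c_OO`. -/
def rConst (m : ℕ) (δ : ℝ) : ℝ :=
  Real.sqrt (cst m δ .O .Y * cst m δ .Y .O) / cst m δ .O .O

/-! ### Auxiliary machinery for the measure-transformation identity -/

section Aux

/-- Evaluate `app` at indices `≤ k`. -/
lemma app_eq {α : Type*} {k : ℕ} (f : Fin (k + 1) → α) {i : ℕ} (h : i ≤ k) :
    app f i = f ⟨i, Nat.lt_succ_of_le h⟩ := by
  unfold app
  exact congrArg f (by ext; simp [Nat.min_eq_left h])

lemma appk_lt {k : ℕ} (f : Fin k → ℝ) {i : ℕ} (h : i < k) : appk f i = f ⟨i, h⟩ := by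
  simp [appk, h]

/-- The finite set of sign vectors. -/
def SgnSet (k : ℕ) : Finset (Fin k → ℝ) := Fintype.piFinset fun _ => ({-1, 1} : Finset ℝ)

lemma mem_SgnSet {k : ℕ} {ζ : Fin k → ℝ} : ζ ∈ SgnSet k ↔ ∀ i, ζ i = -1 ∨ ζ i = 1 := by
  simp [SgnSet, Fintype.mem_piFinset]

/-- Cumulative sign products `σ_i = ∏_{j=1}^i ζ_{j-1}`. -/
def sg (k : ℕ) (ζ : Fin k → ℝ) (i : ℕ) : ℝ := ∏ j ∈ Finset.Icc 1 i, appk ζ (j - 1)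

lemma sg_zero (k : ℕ) (ζ : Fin k → ℝ) : sg k ζ 0 = 1 := by simp [sg]

lemma sg_succ (k : ℕ) (ζ : Fin k → ℝ) (n : ℕ) :
    sg k ζ (n + 1) = sg k ζ n * appk ζ n := by
  unfold sg
  rw [Finset.prod_Icc_succ_top (by omega)]
  simp

lemma sg_pm {k : ℕ} {ζ : Fin k → ℝ} (hζ : ∀ i, ζ i = -1 ∨ ζ i = 1) :
    ∀ n, n ≤ k → sg k ζ n = 1 ∨ sg k ζ n = -1 := by
  intro n
  induction n with
  | zero => intro _; exact Or.inl (sg_zero k ζ)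
  | succ n ih =>
    intro h
    rw [sg_succ, appk_lt ζ (by omega)]
    rcases ih (by omega) with h1 | h1 <;> rcases hζ ⟨n, by omega⟩ with h2 | h2 <;>
      rw [h1, h2] <;> norm_num

lemma sg_sq {k : ℕ} {ζ : Fin k → ℝ} (hζ : ∀ i, ζ i = -1 ∨ ζ i = 1) {n : ℕ} (h : n ≤ k) :
    sg k ζ n * sg k ζ n = 1 := by
  rcases sg_pm hζ n h with h1 | h1 <;> rw [h1] <;> norm_num

/-- Forward map: a vector of increments to its cumulative sign products. -/
def fwdMap {k : ℕ} (ζ : Fin k → ℝ) : Fin k → ℝ := fun j => sg k ζ (j.val + 1)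

/-- Inverse map: cumulative signs to increments. -/
def invMap {k : ℕ} (σ : Fin k → ℝ) : Fin k → ℝ := fun t =>
  if t.val = 0 then σ t
  else σ t * σ ⟨t.val - 1, Nat.lt_of_le_of_lt (Nat.sub_le t.val 1) t.isLt⟩

lemma sg_invMap {k : ℕ} {σ : Fin k → ℝ} (hσ : ∀ i, σ i = -1 ∨ σ i = 1) :
    ∀ n (hn : n < k), sg k (invMap σ) (n + 1) = σ ⟨n, hn⟩ := by
  intro n
  induction n with
  | zero =>
    intro hn
    rw [sg_succ, sg_zero, one_mul, appk_lt (invMap σ) hn]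
    simp [invMap]
  | succ n ih =>
    intro hn
    have hn' : n < k := by omega
    rw [sg_succ, ih hn', appk_lt (invMap σ) hn]
    have h1 : invMap σ ⟨n + 1, hn⟩ = σ ⟨n + 1, hn⟩ * σ ⟨n, hn'⟩ := by
      simp [invMap]
    rw [h1]
    have h2 : σ ⟨n, hn'⟩ * σ ⟨n, hn'⟩ = 1 := by
      rcases hσ ⟨n, hn'⟩ with a | a <;> rw [a] <;> norm_num
    calc σ ⟨n, hn'⟩ * (σ ⟨n + 1, hn⟩ * σ ⟨n, hn'⟩)
        = σ ⟨n + 1, hn⟩ * (σ ⟨n, hn'⟩ * σ ⟨n, hn'⟩) := by ring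
      _ = σ ⟨n + 1, hn⟩ := by rw [h2, mul_one]

/-- Re-indexing a sum over sign vectors by cumulative products, then factorizing. -/
lemma sum_sg {k : ℕ} (F : Fin k → ℝ → ℝ≥0∞) :
    ∑ ζ ∈ SgnSet k, ∏ j : Fin k, F j (sg k ζ (j.val + 1)) =
      ∏ j : Fin k, (F j (-1) + F j 1) := by
  have step1 : ∑ ζ ∈ SgnSet k, ∏ j : Fin k, F j (sg k ζ (j.val + 1)) =
      ∑ σ ∈ SgnSet k, ∏ j : Fin k, F j (σ j) := by
    refine Finset.sum_bij' (i := fun ζ _ => fwdMap ζ) (j := fun σ _ => invMap σ)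
      ?_ ?_ ?_ ?_ ?_
    · intro ζ hζ
      rw [mem_SgnSet] at hζ ⊢
      intro j
      exact Or.symm (sg_pm hζ (j.val + 1) (by omega))
    · intro σ hσ
      rw [mem_SgnSet] at hσ ⊢
      intro t
      unfold invMap
      by_cases h : t.val = 0
      · simp only [if_pos h]; exact hσ t
      · simp only [if_neg h]
        rcases hσ t with a | a <;>
          rcases hσ ⟨t.val - 1, Nat.lt_of_le_of_lt (Nat.sub_le t.val 1) t.isLt⟩ with b | b <;>
          rw [a, b] <;> norm_num
    · intro ζ hζ
      rw [mem_SgnSet] at hζ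
      funext t
      unfold invMap fwdMap
      by_cases h : t.val = 0
      · simp only [if_pos h]
        rw [h, sg_succ, sg_zero, one_mul, appk_lt ζ (h ▸ t.isLt)]
        exact congrArg ζ (by ext; simp [h])
      · simp only [if_neg h]
        have ht1 : t.val - 1 + 1 = t.val := by omega
        simp only [ht1]
        rw [sg_succ, appk_lt ζ t.isLt, mul_comm (sg k ζ t.val) (ζ ⟨t.val, t.isLt⟩),
          mul_assoc, sg_sq hζ (le_of_lt t.isLt), mul_one]
    · intro σ hσ
      rw [mem_SgnSet] at hσ
      funext t
      show sg k (invMap σ) (t.val + 1) = σ t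
      rw [sg_invMap hσ t.val t.isLt]
    · intro ζ _
      rfl
  rw [step1]
  rw [show SgnSet k = Fintype.piFinset (fun _ : Fin k => ({-1, 1} : Finset ℝ)) from rfl]
  rw [← Finset.prod_univ_sum]
  refine Finset.prod_congr rfl fun j _ => ?_
  rw [Finset.sum_insert (by norm_num), Finset.sum_singleton]

end Aux
section Meas

instance isFiniteMeasure_pmMeas (p : ℝ) : IsFiniteMeasure (pmMeas p) := by
  constructor
  rw [pmMeas]
  simp only [Measure.add_apply, Measure.smul_apply, smul_eq_mul]
  exact ENNReal.add_lt_top.mpr ⟨ENNReal.mul_lt_top ENNReal.ofReal_lt_top (by simp),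
    ENNReal.mul_lt_top ENNReal.ofReal_lt_top (by simp)⟩

lemma pmMeas_apply (p : ℝ) {s : Set ℝ} (hs : MeasurableSet s) :
    pmMeas p s = (if (-1 : ℝ) ∈ s then ENNReal.ofReal p else 0) +
      (if (1 : ℝ) ∈ s then ENNReal.ofReal (1 - p) else 0) := by
  rw [pmMeas]
  rw [Measure.add_apply, Measure.smul_apply, Measure.smul_apply,
    Measure.dirac_apply' _ hs, Measure.dirac_apply' _ hs]
  simp [Set.indicator_apply, mul_ite]

lemma isProbabilityMeasure_pm {p : ℝ} (h0 : 0 ≤ p) (h1 : p ≤ 1) :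
    IsProbabilityMeasure (pmMeas p) := by
  constructor
  rw [pmMeas_apply p MeasurableSet.univ]
  simp only [Set.mem_univ, if_true]
  rw [← ENNReal.ofReal_add h0 (by linarith)]
  norm_num

/-- The weight of a sign under `pmMeas p`. -/
def wt (p z : ℝ) : ℝ≥0∞ := if z = -1 then ENNReal.ofReal p else ENNReal.ofReal (1 - p)

lemma pi_pm_eq {k : ℕ} (w : Fin k → ℝ) :
    Measure.pi (fun i => pmMeas (w i)) =
      ∑ ζ ∈ SgnSet k, (∏ i, wt (w i) (ζ i)) • Measure.dirac ζ := by
  refine Measure.pi_eq fun s hs => ?_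
  rw [Measure.finset_sum_apply]
  have hmeas : MeasurableSet (Set.pi Set.univ s) := MeasurableSet.univ_pi hs
  calc ∑ ζ ∈ SgnSet k, ((∏ i, wt (w i) (ζ i)) • Measure.dirac ζ) (Set.pi Set.univ s)
      = ∑ ζ ∈ SgnSet k, ∏ i, (wt (w i) (ζ i) * if ζ i ∈ s i then 1 else 0) := by
        refine Finset.sum_congr rfl fun ζ _ => ?_
        rw [Measure.smul_apply, Measure.dirac_apply' _ hmeas, smul_eq_mul]
        have h1 : (Set.pi Set.univ s).indicator (1 : (Fin k → ℝ) → ℝ≥0∞) ζ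
            = ∏ i, if ζ i ∈ s i then (1 : ℝ≥0∞) else 0 := by
          rw [Fintype.prod_boole]
          simp [Set.indicator_apply, Set.mem_univ_pi]
        rw [h1, ← Finset.prod_mul_distrib]
    _ = ∏ i, ∑ z ∈ ({-1, 1} : Finset ℝ), (wt (w i) z * if z ∈ s i then 1 else 0) := by
        exact (Finset.prod_univ_sum (fun _ : Fin k => ({-1, 1} : Finset ℝ))
          (fun i z => wt (w i) z * if z ∈ s i then 1 else 0)).symm
    _ = ∏ i, pmMeas (w i) (s i) := by
        refine Finset.prod_congr rfl fun i _ => ?_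
        rw [Finset.sum_insert (by norm_num), Finset.sum_singleton, pmMeas_apply _ (hs i)]
        simp only [wt, if_pos rfl, mul_ite, mul_one, mul_zero]
        norm_num

/-- Pushing a density forward under negation. -/
lemma map_neg_withDensity (f : ℝ → ℝ≥0∞) (hf : Measurable f) :
    Measure.map Neg.neg (volume.withDensity f) = volume.withDensity fun x => f (-x) := by
  ext s hs
  rw [Measure.map_apply measurable_neg hs, withDensity_apply _ (hs.preimage measurable_neg),
    withDensity_apply _ hs]
  rw [← lintegral_indicator (hs.preimage measurable_neg), ← lintegral_indicator hs]
  have mp := Measure.measurePreserving_neg (volume : Measure ℝ)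
  rw [← mp.lintegral_comp ((show Measurable fun x : ℝ => f (-x) from
    hf.comp measurable_neg).indicator hs)]
  refine lintegral_congr fun x => ?_
  simp [Set.indicator_apply, Set.mem_preimage]

def expDens : ℝ → ℝ≥0∞ := fun x => ENNReal.ofReal (if 0 ≤ x then Real.exp (-x) else 0)

lemma measurable_expDens : Measurable expDens :=
  Measurable.ennreal_ofReal
    (Measurable.ite measurableSet_Ici (Real.measurable_exp.comp measurable_neg) measurable_const)

lemma exp_add_neg : expMeas + Measure.map Neg.neg expMeas = (2 : ℝ≥0∞) • laplaceMeas := by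
  rw [show expMeas = volume.withDensity expDens from rfl,
    map_neg_withDensity _ measurable_expDens,
    ← withDensity_add_right _ (show Measurable fun x : ℝ => expDens (-x) from
      measurable_expDens.comp measurable_neg)]
  rw [laplaceMeas, ← withDensity_smul _ (by
    exact Measurable.ennreal_ofReal ((measurable_const.mul
      ((Real.measurable_exp.comp (measurable_neg.comp _root_.measurable_abs))))))]
  refine withDensity_congr_ae ?_
  have hne : ∀ᵐ x : ℝ ∂volume, x ≠ 0 := by
    refine ae_iff.mpr ?_
    simpa using Real.volume_singleton (x := (0:ℝ))
  filter_upwards [hne] with x hx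
  have h2 : ((2 : ℝ≥0∞) • fun x : ℝ => ENNReal.ofReal (1 / 2 * Real.exp (-|x|))) x
      = ENNReal.ofReal (Real.exp (-|x|)) := by
    rw [Pi.smul_apply, smul_eq_mul, ← ENNReal.ofReal_ofNat 2,
      ← ENNReal.ofReal_mul (by norm_num),
      show (2 : ℝ) * (1 / 2 * Real.exp (-|x|)) = Real.exp (-|x|) by ring]
  rcases lt_or_gt_of_ne hx with h | h
  · have habs : |x| = -x := abs_of_neg h
    simp only [Pi.add_apply, expDens, h2, habs, neg_neg]
    rw [if_neg (not_le.mpr h), if_pos (by linarith)]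
    simp
  · have habs : |x| = x := abs_of_pos h
    simp only [Pi.add_apply, expDens, h2, habs, neg_neg]
    rw [if_pos (le_of_lt h), if_neg (by simp; linarith)]
    simp

instance isProbabilityMeasure_exp : IsProbabilityMeasure expMeas := by
  constructor
  rw [show expMeas = volume.withDensity expDens from rfl,
    withDensity_apply _ MeasurableSet.univ, Measure.restrict_univ]
  have h1 : expDens = (Set.Ici (0 : ℝ)).indicator fun x => ENNReal.ofReal (Real.exp (-x)) := by
    funext x
    by_cases h : 0 ≤ x <;> simp [expDens, Set.indicator_apply, h]
  rw [h1, lintegral_indicator measurableSet_Ici,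
    setLIntegral_congr (Ioi_ae_eq_Ici (a := (0 : ℝ))).symm]
  have hInt : IntegrableOn (fun x => Real.exp (-x)) (Set.Ioi (0 : ℝ)) := by
    simpa using exp_neg_integrableOn_Ioi 0 one_pos
  rw [← ofReal_integral_eq_lintegral_ofReal hInt
    (ae_of_all _ fun x => (Real.exp_pos _).le)]
  rw [integral_exp_neg_Ioi_zero]
  exact ENNReal.ofReal_one

lemma isProbabilityMeasure_laplace : IsProbabilityMeasure laplaceMeas := by
  constructor
  have h := congrArg (fun μ : Measure ℝ => μ Set.univ) exp_add_neg
  simp only [Measure.add_apply, Measure.smul_apply, smul_eq_mul] at h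
  rw [Measure.map_apply measurable_neg MeasurableSet.univ] at h
  simp only [Set.preimage_univ, measure_univ] at h
  have h2 : (2 : ℝ≥0∞) * laplaceMeas Set.univ = 2 * 1 := by
    rw [mul_one, ← h]; norm_num
  calc laplaceMeas Set.univ = 2⁻¹ * (2 * laplaceMeas Set.univ) := by
        rw [← mul_assoc, ENNReal.inv_mul_cancel (by norm_num) (by norm_num), one_mul]
    _ = 1 := by rw [h2, ← mul_assoc, ENNReal.inv_mul_cancel (by norm_num) (by norm_num), one_mul]

lemma isProbabilityMeasure_unif {b1 b2 : ℝ} (h : b1 < b2) :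
    IsProbabilityMeasure (unifMeas b1 b2) := by
  constructor
  rw [unifMeas, Measure.smul_apply, Measure.restrict_apply_univ, Real.volume_Icc, smul_eq_mul]
  exact ENNReal.inv_mul_cancel (ne_of_gt (ENNReal.ofReal_pos.mpr (sub_pos.mpr h))) ENNReal.ofReal_ne_top

lemma expMeas_Iic : expMeas (Set.Iic (0 : ℝ)) = 0 := by
  rw [show expMeas = volume.withDensity expDens from rfl, withDensity_apply _ measurableSet_Iic]
  have h0 : ∀ᵐ x : ℝ ∂volume, x ∈ Set.Iic (0 : ℝ) → expDens x = 0 := by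
    have hne : ∀ᵐ x : ℝ ∂volume, x ≠ 0 := by
      refine ae_iff.mpr ?_
      simpa using Real.volume_singleton (x := (0:ℝ))
    filter_upwards [hne] with x hx hxle
    rw [Set.mem_Iic] at hxle
    have : ¬ (0 ≤ x) := fun hc => hx (le_antisymm hxle hc)
    simp [expDens, this]
  rw [setLIntegral_congr_fun_ae measurableSet_Iic h0]
  simp

end Meas
section Decomp

/-- The sign-multiplication map. -/
def Phi (k : ℕ) (ζ : Fin k → ℝ) (x : Fin (k + 1) → ℝ) : Fin (k + 1) → ℝ :=
  fun i => x i * sg k ζ i.val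

lemma measurable_Phi {k : ℕ} {ζ : Fin k → ℝ} : Measurable (Phi k ζ) :=
  measurable_pi_lambda _ fun i => (measurable_pi_apply i).mul_const _

/-- The continuous part of both models. -/
def piMu (b1 b2 : ℝ) (k : ℕ) : Measure (Fin (k + 1) → ℝ) :=
  Measure.pi fun i => if i = 0 then unifMeas b1 b2 else expMeas

lemma walk_decomp (b1 b2 : ℝ) (h12 : b1 < b2) (k : ℕ) :
    walkMeas b1 b2 k =
      ((2 : ℝ≥0∞) ^ k)⁻¹ • ∑ ζ ∈ SgnSet k, Measure.map (Phi k ζ) (piMu b1 b2 k) := by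
  haveI hu : IsProbabilityMeasure (unifMeas b1 b2) := isProbabilityMeasure_unif h12
  haveI hl : IsProbabilityMeasure laplaceMeas := isProbabilityMeasure_laplace
  haveI h1 : ∀ i : Fin (k + 1),
      SigmaFinite ((fun i : Fin (k + 1) => if i = 0 then unifMeas b1 b2 else laplaceMeas) i) :=
    fun i => by dsimp only; split <;> infer_instance
  haveI h2 : ∀ i : Fin (k + 1),
      SigmaFinite ((fun i : Fin (k + 1) => if i = 0 then unifMeas b1 b2 else expMeas) i) :=
    fun i => by dsimp only; split <;> infer_instance
  unfold walkMeas
  refine Measure.pi_eq fun s hs => ?_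
  rw [Measure.smul_apply, Measure.finset_sum_apply, smul_eq_mul]
  have key : ∀ ζ ∈ SgnSet k, Measure.map (Phi k ζ) (piMu b1 b2 k) (Set.pi Set.univ s)
      = unifMeas b1 b2 (s 0) *
        ∏ j : Fin k, expMeas ((fun y => y * sg k ζ (j.val + 1)) ⁻¹' s j.succ) := by
    intro ζ _
    rw [Measure.map_apply measurable_Phi (MeasurableSet.univ_pi hs)]
    have hpre : Phi k ζ ⁻¹' Set.pi Set.univ s
        = Set.pi Set.univ (fun i => (fun y => y * sg k ζ i.val) ⁻¹' s i) := by
      ext x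
      simp [Phi, Set.mem_univ_pi]
    rw [hpre, piMu, Measure.pi_pi, Fin.prod_univ_succ]
    have h0 : (if (0 : Fin (k + 1)) = 0 then unifMeas b1 b2 else expMeas)
        ((fun y : ℝ => y * sg k ζ (0 : Fin (k + 1)).val) ⁻¹' s 0) = unifMeas b1 b2 (s 0) := by
      rw [if_pos rfl]
      congr 1
      ext y; simp [sg_zero]
    have hsucc : ∀ j : Fin k, (if (j.succ : Fin (k + 1)) = 0 then unifMeas b1 b2 else expMeas)
        ((fun y : ℝ => y * sg k ζ (j.succ : Fin (k + 1)).val) ⁻¹' s j.succ)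
        = expMeas ((fun y => y * sg k ζ (j.val + 1)) ⁻¹' s j.succ) := fun j => by
      rw [if_neg (Fin.succ_ne_zero j)]
      simp [Fin.val_succ]
    rw [h0, Finset.prod_congr rfl fun j _ => hsucc j]
  rw [Finset.sum_congr rfl key, ← Finset.mul_sum,
    sum_sg (fun j e => expMeas ((fun y => y * e) ⁻¹' s j.succ))]
  have hfac : ∀ j : Fin k,
      expMeas ((fun y : ℝ => y * (-1 : ℝ)) ⁻¹' s j.succ)
        + expMeas ((fun y : ℝ => y * (1 : ℝ)) ⁻¹' s j.succ)
      = 2 * laplaceMeas (s j.succ) := by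
    intro j
    have h := congrArg (fun μ : Measure ℝ => μ (s j.succ)) exp_add_neg
    simp only [Measure.add_apply, Measure.smul_apply, smul_eq_mul] at h
    rw [Measure.map_apply measurable_neg (hs j.succ)] at h
    have e1 : (fun y : ℝ => y * (-1 : ℝ)) ⁻¹' s j.succ = Neg.neg ⁻¹' s j.succ := by
      ext y; simp [mul_neg_one]
    have e2 : (fun y : ℝ => y * (1 : ℝ)) ⁻¹' s j.succ = s j.succ := by
      ext y; simp
    rw [e1, e2, add_comm]
    exact h
  rw [Finset.prod_congr rfl fun j _ => hfac j, Finset.prod_mul_distrib, Finset.prod_const,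
    Finset.card_univ, Fintype.card_fin]
  rw [Fin.prod_univ_succ]
  rw [if_pos rfl]
  have hred : ∀ j : Fin k,
      (if (j.succ : Fin (k + 1)) = 0 then unifMeas b1 b2 else laplaceMeas) (s j.succ)
        = laplaceMeas (s j.succ) := fun j => by rw [if_neg (Fin.succ_ne_zero j)]
  rw [Finset.prod_congr rfl fun j _ => hred j]
  have hA : ((2 : ℝ≥0∞) ^ k)⁻¹ * (2 : ℝ≥0∞) ^ k = 1 :=
    ENNReal.inv_mul_cancel (by positivity) (ENNReal.pow_ne_top (by norm_num))
  calc ((2 : ℝ≥0∞) ^ k)⁻¹ *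
        (unifMeas b1 b2 (s 0) * ((2 : ℝ≥0∞) ^ k * ∏ j : Fin k, laplaceMeas (s j.succ)))
      = (((2 : ℝ≥0∞) ^ k)⁻¹ * (2 : ℝ≥0∞) ^ k) *
        (unifMeas b1 b2 (s 0) * ∏ j : Fin k, laplaceMeas (s j.succ)) := by ring
    _ = unifMeas b1 b2 (s 0) * ∏ j : Fin k, laplaceMeas (s j.succ) := by rw [hA, one_mul]

end Decomp
section Pointwise

lemma app_Phi {k : ℕ} (ζ : Fin k → ℝ) (x : Fin (k + 1) → ℝ) {i : ℕ} (h : i ≤ k) :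
    app (Phi k ζ x) i = x ⟨i, Nat.lt_succ_of_le h⟩ * sg k ζ i := by
  rw [app_eq _ h]; rfl

lemma walkSum_Phi {k : ℕ} (ζ : Fin k → ℝ) (x : Fin (k + 1) → ℝ) {i : ℕ} (hi : i ≤ k) :
    walkSum k (Phi k ζ x) i = Tl k (x, ζ) i := by
  unfold walkSum Tl
  rw [show Finset.range (i + 1) = insert 0 (Finset.Icc 1 i) from by
    ext j; simp [Finset.mem_range, Finset.mem_insert, Finset.mem_Icc]; omega]
  rw [Finset.sum_insert (by simp)]
  congr 1
  · rw [app_Phi ζ x (Nat.zero_le k), sg_zero, mul_one, app_eq _ (Nat.zero_le k)]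
  · refine Finset.sum_congr rfl fun j hj => ?_
    rw [Finset.mem_Icc] at hj
    rw [app_Phi ζ x (le_trans hj.2 hi), app_eq _ (le_trans hj.2 hi)]
    rfl

lemma diffSign_mul {a b s t : ℝ} (ha : 0 < a) (hb : 0 < b)
    (hs : s = 1 ∨ s = -1) (ht : t = 1 ∨ t = -1) :
    diffSign (a * s) (b * t) ↔ ¬ s = t := by
  rcases hs with rfl | rfl <;> rcases ht with rfl | rfl <;>
    simp only [mul_one, mul_neg_one]
  · exact iff_of_false (by rintro (⟨h, _⟩ | ⟨_, h⟩) <;> linarith) (by norm_num)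
  · exact iff_of_true (Or.inr ⟨ha, by linarith⟩) (by norm_num)
  · exact iff_of_true (Or.inl ⟨by linarith, hb⟩) (by norm_num)
  · exact iff_of_false (by rintro (⟨_, h⟩ | ⟨h, _⟩) <;> linarith) (by norm_num)

lemma signChanges_Phi {k : ℕ} {ζ : Fin k → ℝ} (hζ : ∀ i, ζ i = -1 ∨ ζ i = 1)
    {x : Fin (k + 1) → ℝ} (hx : ∀ i : Fin (k + 1), i ≠ 0 → 0 < x i) :
    signChanges k (Phi k ζ x) = ((Finset.Ico 1 k).filter fun i => appk ζ i = -1).card := by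
  unfold signChanges
  congr 1
  refine Finset.filter_congr fun i hi => ?_
  rw [Finset.mem_Ico] at hi
  obtain ⟨hi1, hi2⟩ := hi
  have hik : i ≤ k := by omega
  have hik1 : i + 1 ≤ k := by omega
  have hxi : 0 < x ⟨i, Nat.lt_succ_of_le hik⟩ :=
    hx _ (by simp [Fin.ext_iff]; omega)
  have hxi1 : 0 < x ⟨i + 1, Nat.lt_succ_of_le hik1⟩ :=
    hx _ (by simp [Fin.ext_iff])
  rw [app_Phi ζ x hik, app_Phi ζ x hik1,
    diffSign_mul hxi hxi1 (sg_pm hζ i hik) (sg_pm hζ (i + 1) hik1), sg_succ]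
  rcases sg_pm hζ i hik with h | h <;> rcases hζ ⟨i, by omega⟩ with hz | hz <;>
    rw [h, appk_lt ζ (show i < k by omega), hz] <;> norm_num

lemma pow_signChanges_eq {k : ℕ} (r : ℝ) (X : Fin (k + 1) → ℝ) :
    r ^ signChanges k X =
      ∏ i ∈ Finset.Ico 1 k, (if diffSign (app X i) (app X (i + 1)) then r else 1) := by
  rw [Finset.prod_ite, Finset.prod_const, Finset.prod_const_one, mul_one, signChanges]

lemma measurable_pow_signChanges {k : ℕ} (r : ℝ) :
    Measurable fun X : Fin (k + 1) → ℝ => r ^ signChanges k X := by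
  simp only [pow_signChanges_eq]
  refine Finset.measurable_prod _ fun i _ => Measurable.ite ?_ measurable_const measurable_const
  have hf : Measurable fun X : Fin (k + 1) → ℝ => app X i := by
    unfold app; exact measurable_pi_apply _
  have hg : Measurable fun X : Fin (k + 1) → ℝ => app X (i + 1) := by
    unfold app; exact measurable_pi_apply _
  have hset : {X : Fin (k + 1) → ℝ | diffSign (app X i) (app X (i + 1))} =
      ((fun X : Fin (k + 1) → ℝ => app X i) ⁻¹' Set.Iic 0 ∩
        (fun X : Fin (k + 1) → ℝ => app X (i + 1)) ⁻¹' Set.Ioi 0) ∪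
      ((fun X : Fin (k + 1) → ℝ => app X i) ⁻¹' Set.Ioi 0 ∩
        (fun X : Fin (k + 1) → ℝ => app X (i + 1)) ⁻¹' Set.Iic 0) := by
    ext X
    simp [diffSign, Set.mem_union, Set.mem_inter_iff, Set.mem_preimage]
  exact hset ▸ (((hf measurableSet_Iic).inter (hg measurableSet_Ioi)).union
    ((hf measurableSet_Ioi).inter (hg measurableSet_Iic)))

lemma measurable_walkSum (k i : ℕ) : Measurable fun X : Fin (k + 1) → ℝ => walkSum k X i := by
  unfold walkSum app
  exact Finset.measurable_sum _ fun j _ => measurable_pi_apply _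

lemma measurable_appk (k c : ℕ) : Measurable fun z : Fin k → ℝ => appk z c := by
  by_cases h : c < k
  · simp only [appk, dif_pos h]
    exact measurable_pi_apply _
  · simp only [appk, dif_neg h]
    exact measurable_const

lemma measurable_Tl_left (k : ℕ) (ζ : Fin k → ℝ) (i : ℕ) :
    Measurable fun x : Fin (k + 1) → ℝ => Tl k (x, ζ) i := by
  unfold Tl app
  dsimp only
  exact Measurable.add (measurable_pi_apply _)
    (Finset.measurable_sum _ fun j _ => (measurable_pi_apply _).mul_const _)

lemma measurable_Tl (k i : ℕ) :
    Measurable fun p : (Fin (k + 1) → ℝ) × (Fin k → ℝ) => Tl k p i := by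
  unfold Tl app
  refine Measurable.add ((measurable_pi_apply _).comp measurable_fst)
    (Finset.measurable_sum _ fun j _ => Measurable.mul ?_ ?_)
  · exact (measurable_pi_apply _).comp measurable_fst
  · exact Finset.measurable_prod _ fun l _ => (measurable_appk k _).comp measurable_snd

lemma measurableSet_Sev (b1 b2 : ℝ) (k : ℕ) :
    MeasurableSet {X : Fin (k + 1) → ℝ |
      ∀ i, 1 ≤ i → i ≤ k → b1 ≤ walkSum k X i ∧ walkSum k X i ≤ b2} := by
  have h : {X : Fin (k + 1) → ℝ |
      ∀ i, 1 ≤ i → i ≤ k → b1 ≤ walkSum k X i ∧ walkSum k X i ≤ b2}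
      = ⋂ i, ⋂ (_ : 1 ≤ i), ⋂ (_ : i ≤ k),
          (fun X : Fin (k + 1) → ℝ => walkSum k X i) ⁻¹' Set.Icc b1 b2 := by
    ext X
    simp [Set.mem_iInter, Set.mem_preimage, Set.mem_Icc]
  rw [h]
  exact MeasurableSet.iInter fun i => MeasurableSet.iInter fun _ =>
    MeasurableSet.iInter fun _ => (measurable_walkSum k i) measurableSet_Icc

lemma measurableSet_Bev (b1 b2 : ℝ) (k : ℕ) (ζ : Fin k → ℝ) :
    MeasurableSet {x : Fin (k + 1) → ℝ |
      ∀ i, 1 ≤ i → i ≤ k → b1 ≤ Tl k (x, ζ) i ∧ Tl k (x, ζ) i ≤ b2} := by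
  have h : {x : Fin (k + 1) → ℝ |
      ∀ i, 1 ≤ i → i ≤ k → b1 ≤ Tl k (x, ζ) i ∧ Tl k (x, ζ) i ≤ b2}
      = ⋂ i, ⋂ (_ : 1 ≤ i), ⋂ (_ : i ≤ k),
          (fun x : Fin (k + 1) → ℝ => Tl k (x, ζ) i) ⁻¹' Set.Icc b1 b2 := by
    ext x
    simp [Set.mem_iInter, Set.mem_preimage, Set.mem_Icc]
  rw [h]
  exact MeasurableSet.iInter fun i => MeasurableSet.iInter fun _ =>
    MeasurableSet.iInter fun _ => (measurable_Tl_left k ζ i) measurableSet_Icc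

lemma measurableSet_Tev (b1 b2 : ℝ) (k : ℕ) :
    MeasurableSet {p : (Fin (k + 1) → ℝ) × (Fin k → ℝ) |
      ∀ i, 1 ≤ i → i ≤ k → b1 ≤ Tl k p i ∧ Tl k p i ≤ b2} := by
  have h : {p : (Fin (k + 1) → ℝ) × (Fin k → ℝ) |
      ∀ i, 1 ≤ i → i ≤ k → b1 ≤ Tl k p i ∧ Tl k p i ≤ b2}
      = ⋂ i, ⋂ (_ : 1 ≤ i), ⋂ (_ : i ≤ k),
          (fun p : (Fin (k + 1) → ℝ) × (Fin k → ℝ) => Tl k p i) ⁻¹' Set.Icc b1 b2 := by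
    ext p
    simp [Set.mem_iInter, Set.mem_preimage, Set.mem_Icc]
  rw [h]
  exact MeasurableSet.iInter fun i => MeasurableSet.iInter fun _ =>
    MeasurableSet.iInter fun _ => (measurable_Tl k i) measurableSet_Icc

lemma ae_pos (b1 b2 : ℝ) (h12 : b1 < b2) (k : ℕ) :
    ∀ᵐ x ∂piMu b1 b2 k, ∀ i : Fin (k + 1), i ≠ 0 → 0 < x i := by
  haveI hu : IsProbabilityMeasure (unifMeas b1 b2) := isProbabilityMeasure_unif h12
  haveI h2 : ∀ i : Fin (k + 1),
      SigmaFinite ((fun i : Fin (k + 1) => if i = 0 then unifMeas b1 b2 else expMeas) i) :=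
    fun i => by dsimp only; split <;> infer_instance
  rw [ae_iff]
  have hnull : ∀ i : Fin (k + 1), i ≠ 0 →
      piMu b1 b2 k ((fun x : Fin (k + 1) → ℝ => x i) ⁻¹' Set.Iic 0) = 0 := by
    intro i hi
    have hset : (fun x : Fin (k + 1) → ℝ => x i) ⁻¹' Set.Iic 0
        = Set.pi Set.univ (Function.update (fun _ : Fin (k + 1) => (Set.univ : Set ℝ)) i
            (Set.Iic 0)) := by
      ext x
      constructor
      · intro hxm j _
        by_cases hj : j = i
        · subst hj; simpa [Function.update] using hxm
        · simp [Function.update, hj]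
      · intro hxm
        have := hxm i (Set.mem_univ i)
        simpa [Function.update] using this
    rw [hset, piMu, Measure.pi_pi]
    refine Finset.prod_eq_zero (Finset.mem_univ i) ?_
    rw [Function.update_self, if_neg hi]
    exact expMeas_Iic
  refine measure_mono_null (t := ⋃ i : Fin (k + 1), ⋃ (_ : i ≠ 0),
      (fun x : Fin (k + 1) → ℝ => x i) ⁻¹' Set.Iic 0) (fun x hx => ?_) ?_
  · simp only [Set.mem_setOf_eq] at hx
    push_neg at hx
    obtain ⟨i, hi0, hle⟩ := hx
    exact Set.mem_iUnion.mpr ⟨i, Set.mem_iUnion.mpr ⟨hi0, hle⟩⟩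
  · exact measure_iUnion_null fun i => measure_iUnion_null fun hi => hnull i hi

end Pointwise
section Key

/-- The walk event. -/
def SevSet (b1 b2 : ℝ) (k : ℕ) : Set (Fin (k + 1) → ℝ) :=
  {X | ∀ i, 1 ≤ i → i ≤ k → b1 ≤ walkSum k X i ∧ walkSum k X i ≤ b2}

/-- The model-2 event. -/
def TevSet (b1 b2 : ℝ) (k : ℕ) : Set ((Fin (k + 1) → ℝ) × (Fin k → ℝ)) :=
  {p | ∀ i, 1 ≤ i → i ≤ k → b1 ≤ Tl k p i ∧ Tl k p i ≤ b2}

/-- Sections of the model-2 event. -/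
def BevSet (b1 b2 : ℝ) (k : ℕ) (ζ : Fin k → ℝ) : Set (Fin (k + 1) → ℝ) :=
  {x | ∀ i, 1 ≤ i → i ≤ k → b1 ≤ Tl k (x, ζ) i ∧ Tl k (x, ζ) i ≤ b2}

lemma wt_half (z : ℝ) : wt (1 / 2) z = ENNReal.ofReal (1 / 2) := by
  unfold wt; split <;> norm_num

lemma key_identity (b1 b2 : ℝ) (h12 : b1 < b2) (r : ℝ) (hr : 0 ≤ r) (k : ℕ) (hk : 1 ≤ k) :
    ∫⁻ X in SevSet b1 b2 k,
      ENNReal.ofReal (r ^ signChanges k X) ∂walkMeas b1 b2 k =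
    ENNReal.ofReal (((1 + r) / 2) ^ (k - 1)) * model2 b1 b2 r k (TevSet b1 b2 k) := by
  haveI hu : IsProbabilityMeasure (unifMeas b1 b2) := isProbabilityMeasure_unif h12
  have h1r : (0 : ℝ) < 1 + r := by linarith
  haveI hp2 : ∀ i : Fin k, IsProbabilityMeasure
      ((fun i : Fin k => if i.val = 0 then pmMeas (1 / 2) else pmMeas (r / (1 + r))) i) := by
    intro i; dsimp only; split
    · exact isProbabilityMeasure_pm (by norm_num) (by norm_num)
    · exact isProbabilityMeasure_pm (div_nonneg hr (by linarith))
        ((div_le_one (by linarith)).mpr (by linarith))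
  haveI hsf : ∀ i : Fin (k + 1),
      SigmaFinite ((fun i : Fin (k + 1) => if i = 0 then unifMeas b1 b2 else expMeas) i) :=
    fun i => by dsimp only; split <;> infer_instance
  have hSev : MeasurableSet (SevSet b1 b2 k) := measurableSet_Sev b1 b2 k
  have hTev : MeasurableSet (TevSet b1 b2 k) := measurableSet_Tev b1 b2 k
  have hBev : ∀ ζ : Fin k → ℝ, MeasurableSet (BevSet b1 b2 k ζ) :=
    fun ζ => measurableSet_Bev b1 b2 k ζ
  -- LHS
  have hL : ∫⁻ X in SevSet b1 b2 k,
        ENNReal.ofReal (r ^ signChanges k X) ∂walkMeas b1 b2 k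
      = ((2 : ℝ≥0∞) ^ k)⁻¹ * ∑ ζ ∈ SgnSet k,
          ENNReal.ofReal r ^ ((Finset.Ico 1 k).filter fun i => appk ζ i = -1).card *
            piMu b1 b2 k (BevSet b1 b2 k ζ) := by
    rw [← lintegral_indicator hSev, walk_decomp b1 b2 h12 k,
      lintegral_smul_measure, lintegral_finset_sum_measure]
    congr 1
    refine Finset.sum_congr rfl fun ζ hζ => ?_
    rw [lintegral_map (((measurable_pow_signChanges r).ennreal_ofReal).indicator hSev)
      measurable_Phi]
    have hcongr : (fun x => (SevSet b1 b2 k).indicator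
          (fun X => ENNReal.ofReal (r ^ signChanges k X)) (Phi k ζ x))
        =ᵐ[piMu b1 b2 k]
        fun x => (BevSet b1 b2 k ζ).indicator
          (fun _ => ENNReal.ofReal r ^
            ((Finset.Ico 1 k).filter fun i => appk ζ i = -1).card) x := by
      filter_upwards [ae_pos b1 b2 h12 k] with x hx
      have hmemiff : Phi k ζ x ∈ SevSet b1 b2 k ↔ x ∈ BevSet b1 b2 k ζ := by
        constructor
        · intro hmem i hi1 hi2
          rw [← walkSum_Phi ζ x hi2]
          exact hmem i hi1 hi2
        · intro hmem i hi1 hi2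
          rw [walkSum_Phi ζ x hi2]
          exact hmem i hi1 hi2
      by_cases hmem : x ∈ BevSet b1 b2 k ζ
      · rw [Set.indicator_of_mem (hmemiff.mpr hmem), Set.indicator_of_mem hmem,
          signChanges_Phi (mem_SgnSet.mp hζ) hx, ENNReal.ofReal_pow hr]
      · rw [Set.indicator_of_notMem (fun hc => hmem (hmemiff.mp hc)),
          Set.indicator_of_notMem hmem]
    rw [lintegral_congr_ae hcongr, lintegral_indicator (hBev ζ), setLIntegral_const]
  -- RHS
  have hpi2 : (Measure.pi fun i : Fin k =>
        if i.val = 0 then pmMeas (1 / 2) else pmMeas (r / (1 + r)))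
      = ∑ ζ ∈ SgnSet k,
          (∏ i : Fin k, wt (if i.val = 0 then (1 / 2 : ℝ) else r / (1 + r)) (ζ i)) •
            Measure.dirac ζ := by
    rw [show (fun i : Fin k => if i.val = 0 then pmMeas (1 / 2) else pmMeas (r / (1 + r)))
        = fun i : Fin k => pmMeas (if i.val = 0 then (1 / 2 : ℝ) else r / (1 + r)) from
      funext fun i => (apply_ite pmMeas _ _ _).symm]
    exact pi_pm_eq _
  have hR : model2 b1 b2 r k (TevSet b1 b2 k)
      = ∑ ζ ∈ SgnSet k,
          (∏ i : Fin k, wt (if i.val = 0 then (1 / 2 : ℝ) else r / (1 + r)) (ζ i)) *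
            piMu b1 b2 k (BevSet b1 b2 k ζ) := by
    rw [show model2 b1 b2 r k = (piMu b1 b2 k).prod
      (Measure.pi fun i : Fin k => if i.val = 0 then pmMeas (1 / 2) else pmMeas (r / (1 + r)))
      from rfl]
    rw [Measure.prod_apply hTev]
    have hsec : ∀ x : Fin (k + 1) → ℝ,
        (Measure.pi fun i : Fin k =>
            if i.val = 0 then pmMeas (1 / 2) else pmMeas (r / (1 + r)))
          (Prod.mk x ⁻¹' TevSet b1 b2 k)
        = ∑ ζ ∈ SgnSet k,
            (∏ i : Fin k, wt (if i.val = 0 then (1 / 2 : ℝ) else r / (1 + r)) (ζ i)) *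
              (BevSet b1 b2 k ζ).indicator (fun _ => 1) x := by
      intro x
      rw [hpi2, Measure.finset_sum_apply]
      refine Finset.sum_congr rfl fun ζ _ => ?_
      rw [Measure.smul_apply, smul_eq_mul,
        Measure.dirac_apply' _ (measurable_prodMk_left hTev)]
      congr 1
    rw [lintegral_congr hsec, lintegral_finset_sum _
      (fun ζ _ => (measurable_const.indicator (hBev ζ)).const_mul _)]
    refine Finset.sum_congr rfl fun ζ _ => ?_
    rw [lintegral_const_mul _ (measurable_const.indicator (hBev ζ)),
      lintegral_indicator (hBev ζ), setLIntegral_one]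
  -- weights
  have hW : ∀ ζ ∈ SgnSet k,
      (∏ i : Fin k, wt (if i.val = 0 then (1 / 2 : ℝ) else r / (1 + r)) (ζ i))
      = (ENNReal.ofReal (1 / 2) * ENNReal.ofReal (1 / (1 + r)) ^ (k - 1)) *
          ENNReal.ofReal r ^ ((Finset.Ico 1 k).filter fun i => appk ζ i = -1).card := by
    intro ζ _
    rw [← Finset.prod_filter_mul_prod_filter_not Finset.univ (fun i : Fin k => i.val = 0)]
    have hk0 : 0 < k := hk
    have hfil0 : Finset.univ.filter (fun i : Fin k => i.val = 0) = {(⟨0, hk0⟩ : Fin k)} := by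
      ext i
      simp [Finset.mem_filter, Fin.ext_iff]
    have hp1 : ∏ i ∈ Finset.univ.filter (fun i : Fin k => i.val = 0),
        wt (if i.val = 0 then (1 / 2 : ℝ) else r / (1 + r)) (ζ i)
        = ENNReal.ofReal (1 / 2) := by
      rw [hfil0, Finset.prod_singleton, if_pos rfl, wt_half]
    have hcard : (Finset.univ.filter (fun i : Fin k => ¬ i.val = 0)).card = k - 1 := by
      have h := Finset.card_filter_add_card_filter_not
        (s := (Finset.univ : Finset (Fin k))) (p := fun i : Fin k => i.val = 0)
      rw [hfil0, Finset.card_singleton, Finset.card_univ, Fintype.card_fin] at h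
      omega
    have hfac : ∀ i ∈ Finset.univ.filter (fun i : Fin k => ¬ i.val = 0),
        wt (if i.val = 0 then (1 / 2 : ℝ) else r / (1 + r)) (ζ i)
        = ENNReal.ofReal (1 / (1 + r)) * (if ζ i = -1 then ENNReal.ofReal r else 1) := by
      intro i hi
      rw [Finset.mem_filter] at hi
      rw [if_neg hi.2]
      unfold wt
      by_cases hz : ζ i = -1
      · rw [if_pos hz, if_pos hz, ← ENNReal.ofReal_mul (by positivity)]
        congr 1
        field_simp
      · rw [if_neg hz, if_neg hz, mul_one]
        congr 1
        field_simp
        ring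
    rw [hp1, Finset.prod_congr rfl hfac, Finset.prod_mul_distrib, Finset.prod_const, hcard,
      Finset.prod_ite, Finset.prod_const, Finset.prod_const_one, mul_one]
    have hbij : ((Finset.univ.filter fun i : Fin k => ¬ i.val = 0).filter
          fun i => ζ i = -1).card
        = ((Finset.Ico 1 k).filter fun i => appk ζ i = -1).card := by
      refine Finset.card_bij (fun i _ => i.val) ?_ ?_ ?_
      · intro a ha
        simp only [Finset.mem_filter, Finset.mem_univ, true_and, Finset.mem_Ico] at ha ⊢
        obtain ⟨h0, hz⟩ := ha
        refine ⟨⟨by omega, a.isLt⟩, ?_⟩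
        rw [appk_lt ζ a.isLt]
        exact hz
      · intro a _ b _ h
        exact Fin.ext h
      · intro b hb
        simp only [Finset.mem_filter, Finset.mem_Ico] at hb
        obtain ⟨⟨h1b, h2b⟩, hzb⟩ := hb
        refine ⟨⟨b, h2b⟩, ?_, rfl⟩
        simp only [Finset.mem_filter, Finset.mem_univ, true_and]
        constructor
        · show ¬ b = 0
          omega
        · rw [appk_lt ζ h2b] at hzb
          exact hzb
    rw [hbij]
    ring
  -- coefficient identity
  have hC : ENNReal.ofReal (((1 + r) / 2) ^ (k - 1)) *
      (ENNReal.ofReal (1 / 2) * ENNReal.ofReal (1 / (1 + r)) ^ (k - 1))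
      = ((2 : ℝ≥0∞) ^ k)⁻¹ := by
    have hpow : ((1 + r) / 2) ^ (k - 1) * (1 / 2 * (1 / (1 + r)) ^ (k - 1))
        = (1 / 2 : ℝ) ^ k := by
      have h1 : ((1 + r) / 2) * (1 / (1 + r)) = 1 / 2 := by
        field_simp
      calc ((1 + r) / 2) ^ (k - 1) * (1 / 2 * (1 / (1 + r)) ^ (k - 1))
          = (((1 + r) / 2) * (1 / (1 + r))) ^ (k - 1) * (1 / 2) := by
            rw [mul_pow]; ring
        _ = (1 / 2 : ℝ) ^ (k - 1) * (1 / 2) := by rw [h1]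
        _ = (1 / 2 : ℝ) ^ k := by rw [← pow_succ, Nat.sub_add_cancel hk]
    rw [← ENNReal.ofReal_pow (by positivity : (0 : ℝ) ≤ 1 / (1 + r)),
      ← ENNReal.ofReal_mul (by norm_num),
      ← ENNReal.ofReal_mul (pow_nonneg (by linarith) _), hpow,
      ENNReal.ofReal_pow (by norm_num), ENNReal.inv_pow]
    congr 1
    rw [show (1 / 2 : ℝ) = (2 : ℝ)⁻¹ by norm_num,
      ENNReal.ofReal_inv_of_pos (by norm_num)]
    norm_num
  rw [hL, hR, Finset.mul_sum, Finset.mul_sum]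
  refine Finset.sum_congr rfl fun ζ hζ => ?_
  rw [hW ζ hζ, ← hC]
  ring

end Key
/-- the measure-transformation identity
`E[r^{N(k)} 1{b_1 ≤ S_i ≤ b_2 ∀ i}] = ((1+r)/2)^{k-1} P(b_1 ≤ T_i ≤ b_2 ∀ i)`. -/
theorem measure_transformation_identity
    (m : ℕ) (hm : 2 ≤ m) (δ : ℝ) (hδ : 0 < δ)
    (b1 b2 : ℝ) (hb1 : 0 < b1) (hb12 : b1 < b2) (k : ℕ) (hk : 1 ≤ k) :
    (∫ X in {X : Fin (k + 1) → ℝ |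
        ∀ i, 1 ≤ i → i ≤ k → b1 ≤ walkSum k X i ∧ walkSum k X i ≤ b2},
      rConst m δ ^ signChanges k X ∂walkMeas b1 b2 k) =
    ((1 + rConst m δ) / 2) ^ (k - 1) *
      (model2 b1 b2 (rConst m δ) k
        {p | ∀ i, 1 ≤ i → i ≤ k → b1 ≤ Tl k p i ∧ Tl k p i ≤ b2}).toReal := by
  have hm2 : (2 : ℝ) ≤ (m : ℝ) := by exact_mod_cast hm
  have hr : 0 ≤ rConst m δ := by
    apply div_nonneg (Real.sqrt_nonneg _)
    show (0 : ℝ) ≤ (m : ℝ) * ((m : ℝ) + δ) / (2 * (m : ℝ) + δ)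
    apply div_nonneg (mul_nonneg (by linarith) (by linarith)) (by linarith)
  rw [integral_eq_lintegral_of_nonneg_ae
    (ae_of_all _ fun X => pow_nonneg hr _)
    ((measurable_pow_signChanges (rConst m δ)).aestronglyMeasurable)]
  rw [show {X : Fin (k + 1) → ℝ | ∀ i, 1 ≤ i → i ≤ k →
      b1 ≤ walkSum k X i ∧ walkSum k X i ≤ b2} = SevSet b1 b2 k from rfl]
  rw [key_identity b1 b2 hb12 (rConst m δ) hr k hk]
  rw [ENNReal.toReal_mul, ENNReal.toReal_ofReal (pow_nonneg (by linarith) _)]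
  rfl

end PAPaper
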